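/- arXiv:math/0610634 — 3 statements merged into one kernel-verified Lean document; each statement's English description precedes it below -/
import Mathlib

section
/- Suppose the d-tuple A = (A_1, ..., A_d) of bounded operators on X is strongly stable, i.e., for every x in X the sums over words v of length N of ||A^v x||^2 tend to 0 as N tends to infinity. Then the generalized Stein equation H - A_1* H A_1 - ... - A_d* H A_d = C* C has at most one positive semidefinite bounded solution H, namely the observability gramian sum_{v in F_d} A^{v*} C* C A^v. -/
/-!
Iterating the Stein equation `N` times gives
`H = ∑_{|v| < N} A^{v*} C* C A^v + ∑_{|w| = N} A^{w*} H A^w`, with both sums positive.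
Hence every finite partial sum of the gramian lies below `H`, and a family of positive operators
with partial sums bounded in the Loewner order is strongly summable: this rests on
`‖T x‖² ≤ ‖T‖ ⟪T x, x⟫` for `T ≥ 0`. The same inequality, together with
`⟪(∑_{|w| = N} A^{w*} H A^w) x, x⟫ ≤ ‖H‖ ∑_{|w| = N} ‖A^w x‖²`, shows that strong stability
drives the remainder to `0`, which identifies the sum with `H x`.
-/

open ContinuousLinearMap

noncomputable section

variable {X Y : Type*}
  [NormedAddCommGroup X] [InnerProductSpace ℂ X] [CompleteSpace X]
  [NormedAddCommGroup Y] [InnerProductSpace ℂ Y] [CompleteSpace Y]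

/-- `A^v`: for a word `v = i_N … i_1` (stored as the list `[i_N, …, i_1]`), the
product `A_{i_N} ∘ A_{i_{N-1}} ∘ ⋯ ∘ A_{i_1}`. -/
def wordProd {d : ℕ} (A : Fin d → X →L[ℂ] X) (v : List (Fin d)) : X →L[ℂ] X :=
  (v.map A).prod

/-- `A^w` for a word of length `N` encoded as a function `w : Fin N → Fin d`. -/
def funProd {d N : ℕ} (A : Fin d → X →L[ℂ] X) (w : Fin N → Fin d) : X →L[ℂ] X :=
  wordProd A (List.ofFn w)

open Filter Finset Topology RCLike

lemma CStarAlgebra.mul_self_le_norm_smul {A : Type*} [NonUnitalCStarAlgebra A] [PartialOrder A]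
    [StarOrderedRing A] {a : A} (ha : 0 ≤ a) : a * a ≤ ‖a‖ • a := by
  set s := CFC.sqrt a
  have hs : s * s = a := CFC.sqrt_mul_sqrt_self a ha
  have hstar : star s = s := (CFC.sqrt_nonneg a).isSelfAdjoint.star_eq
  calc a * a = star s * a * s := by rw [hstar, ← hs, mul_assoc, mul_assoc, mul_assoc]
    _ ≤ ‖a‖ • (star s * s) := CStarAlgebra.star_left_conjugate_le_norm_smul ha.isSelfAdjoint
    _ = ‖a‖ • a := by rw [hstar, hs]

lemma summable_of_norm_sum_sq_le {ι F : Type*} [NormedAddCommGroup F] [CompleteSpace F]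
    {g : ι → F} {q : ι → ℝ} (hq : Summable q) {c : ℝ} (hc : 0 ≤ c)
    (hg : ∀ t : Finset ι, ‖∑ i ∈ t, g i‖ ^ 2 ≤ c * ∑ i ∈ t, q i) : Summable g := by
  refine summable_iff_vanishing_norm.2 fun ε hε => ?_
  have hδ : 0 < ε ^ 2 / (c + 1) := by positivity
  obtain ⟨s, hs⟩ := summable_iff_vanishing_norm.1 hq _ hδ
  refine ⟨s, fun t ht => pow_lt_pow_iff_left₀ (norm_nonneg _) hε.le two_ne_zero |>.1 ?_⟩
  have hqt : ∑ i ∈ t, q i ≤ ε ^ 2 / (c + 1) :=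
    ((le_abs_self _).trans_lt (by simpa [Real.norm_eq_abs] using hs t ht)).le
  calc ‖∑ i ∈ t, g i‖ ^ 2 ≤ c * ∑ i ∈ t, q i := hg t
    _ ≤ c * (ε ^ 2 / (c + 1)) := by gcongr
    _ < (c + 1) * (ε ^ 2 / (c + 1)) := by gcongr; linarith
    _ = ε ^ 2 := by field_simp

section Hilbert

variable {E : Type*} [NormedAddCommGroup E] [InnerProductSpace ℂ E] [CompleteSpace E]

lemma ContinuousLinearMap.adjoint_conj_nonneg {K : E →L[ℂ] E} (hK : 0 ≤ K) (P : E →L[ℂ] E) :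
    0 ≤ adjoint P ∘L K ∘L P :=
  (nonneg_iff_isPositive _).2 (((nonneg_iff_isPositive K).1 hK).adjoint_conj P)

lemma ContinuousLinearMap.IsPositive.norm_apply_sq_le {T : E →L[ℂ] E} (hT : T.IsPositive)
    (x : E) : ‖T x‖ ^ 2 ≤ ‖T‖ * re (inner ℂ (T x) x) := by
  have h := ((le_def _ _).1 <|
    CStarAlgebra.mul_self_le_norm_smul ((nonneg_iff_isPositive T).2 hT)).re_inner_nonneg_left x
  rw [sub_apply, inner_sub_left, map_sub, mul_apply_eq_comp,
    hT.inner_left_eq_inner_right (T x) x, inner_self_eq_norm_sq, smul_apply,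
    RCLike.real_smul_eq_coe_smul (K := ℂ), inner_smul_real_left, real_smul_eq_coe_mul,
    re_ofReal_mul] at h
  linarith

lemma ContinuousLinearMap.summable_apply_of_sum_le {ι : Type*} {f : ι → E →L[ℂ] E}
    (hf : ∀ i, 0 ≤ f i) {B : E →L[ℂ] E} (hB : ∀ t : Finset ι, ∑ i ∈ t, f i ≤ B) (x : E) :
    Summable fun i => f i x := by
  set q : ι → ℝ := fun i => re (inner ℂ (f i x) x)
  have hsum_q (t : Finset ι) : ∑ i ∈ t, q i = re (inner ℂ ((∑ i ∈ t, f i) x) x) := by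
    rw [_root_.sum_apply, sum_inner, map_sum]
  have hq : Summable q := by
    refine summable_of_sum_le (c := re (inner ℂ (B x) x))
      (fun i => ((nonneg_iff_isPositive _).1 (hf i)).re_inner_nonneg_left x) fun t => ?_
    have := ((le_def _ _).1 (hB t)).re_inner_nonneg_left x
    rwa [hsum_q, ← sub_nonneg, ← map_sub, ← inner_sub_left, ← sub_apply]
  refine summable_of_norm_sum_sq_le hq (norm_nonneg B) fun t => ?_
  have hpos : 0 ≤ ∑ i ∈ t, f i := sum_nonneg fun i _ => hf i
  rw [hsum_q, ← _root_.sum_apply]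
  calc ‖(∑ i ∈ t, f i) x‖ ^ 2 ≤ ‖∑ i ∈ t, f i‖ * re (inner ℂ ((∑ i ∈ t, f i) x) x) :=
        ((nonneg_iff_isPositive _).1 hpos).norm_apply_sq_le x
    _ ≤ ‖B‖ * re (inner ℂ ((∑ i ∈ t, f i) x) x) := by
        gcongr
        · exact ((nonneg_iff_isPositive _).1 hpos).re_inner_nonneg_left x
        · exact CStarAlgebra.norm_le_norm_of_nonneg_of_le hpos (hB t)

lemma ContinuousLinearMap.hasSum_apply_of_tendsto_sum_range {κ : ℕ → Type*}
    [∀ n, Fintype (κ n)] {f : (Σ n, κ n) → E →L[ℂ] E} (hf : ∀ i, 0 ≤ f i) {B : E →L[ℂ] E}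
    (hB : ∀ N, ∑ n ∈ range N, ∑ k, f ⟨n, k⟩ ≤ B) {x y : E}
    (hy : Tendsto (fun N => ∑ n ∈ range N, ∑ k, f ⟨n, k⟩ x) atTop (𝓝 y)) :
    HasSum (fun i => f i x) y := by
  have hbound (t : Finset (Σ n, κ n)) : ∑ i ∈ t, f i ≤ B := by
    have hsub : t ⊆ (range (t.sup Sigma.fst + 1)).sigma fun _ => univ := fun i hi =>
      mem_sigma.2 ⟨mem_range.2 (Nat.lt_succ_of_le (le_sup (f := Sigma.fst) hi)), mem_univ _⟩
    calc ∑ i ∈ t, f i ≤ ∑ i ∈ (range (t.sup Sigma.fst + 1)).sigma fun _ => univ, f i :=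
          sum_le_sum_of_subset_of_nonneg hsub fun i _ _ => hf i
      _ ≤ B := by rw [sum_sigma]; exact hB _
  obtain ⟨a, ha⟩ := summable_apply_of_sum_le hf hbound x
  have hlevels := (ha.sigma fun n => hasSum_fintype fun k => f ⟨n, k⟩ x).tendsto_sum_nat
  rwa [tendsto_nhds_unique hlevels hy] at ha

end Hilbert

section Words

variable {d : ℕ} (A : Fin d → X →L[ℂ] X)

omit [CompleteSpace X] in
lemma funProd_cons {N : ℕ} (j : Fin d) (w : Fin N → Fin d) :
    funProd A (Fin.cons j w) = A j ∘L funProd A w := by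
  simp [funProd, wordProd, List.ofFn_succ, ContinuousLinearMap.mul_def]

def conjSum (N : ℕ) (K : X →L[ℂ] X) : X →L[ℂ] X :=
  ∑ w : Fin N → Fin d, adjoint (funProd A w) ∘L K ∘L funProd A w

lemma conjSum_zero (K : X →L[ℂ] X) : conjSum A 0 K = K := by
  simp [conjSum, funProd, wordProd, ContinuousLinearMap.one_def, adjoint_id]

lemma conjSum_succ (N : ℕ) (K : X →L[ℂ] X) :
    conjSum A (N + 1) K = conjSum A N (∑ j, adjoint (A j) ∘L K ∘L A j) := by
  rw [conjSum, conjSum, ← (Fin.consEquiv fun _ => Fin d).sum_comp, Fintype.sum_prod_type,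
    sum_comm]
  refine sum_congr rfl fun w _ => ?_
  rw [finsetSum_comp, comp_finsetSum]
  refine sum_congr rfl fun j _ => ?_
  change adjoint (funProd A (Fin.cons j w)) ∘L K ∘L funProd A (Fin.cons j w) = _
  rw [funProd_cons, adjoint_comp]
  rfl

lemma conjSum_add (N : ℕ) (K L : X →L[ℂ] X) :
    conjSum A N (K + L) = conjSum A N K + conjSum A N L := by
  simp only [conjSum, add_comp, comp_add, sum_add_distrib]

lemma conjSum_nonneg (N : ℕ) {K : X →L[ℂ] X} (hK : 0 ≤ K) : 0 ≤ conjSum A N K :=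
  sum_nonneg fun w _ => adjoint_conj_nonneg hK (funProd A w)

lemma eq_sum_conjSum_add_conjSum {K Q : X →L[ℂ] X}
    (hK : K = ∑ j, adjoint (A j) ∘L K ∘L A j + Q) (N : ℕ) :
    K = ∑ n ∈ range N, conjSum A n Q + conjSum A N K := by
  induction N with
  | zero => rw [range_zero, sum_empty, zero_add, conjSum_zero]
  | succ N ih =>
    calc K = ∑ n ∈ range N, conjSum A n Q + conjSum A N K := ih
      _ = ∑ n ∈ range N, conjSum A n Q + conjSum A N (∑ j, adjoint (A j) ∘L K ∘L A j + Q) := by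
          rw [← hK]
      _ = ∑ n ∈ range (N + 1), conjSum A n Q + conjSum A (N + 1) K := by
          rw [conjSum_add, ← conjSum_succ, sum_range_succ]
          abel

lemma re_inner_conjSum_apply_le (N : ℕ) (K : X →L[ℂ] X) (x : X) :
    re (inner ℂ (conjSum A N K x) x) ≤ ‖K‖ * ∑ w : Fin N → Fin d, ‖funProd A w x‖ ^ 2 := by
  rw [conjSum, _root_.sum_apply, sum_inner, map_sum, mul_sum]
  refine sum_le_sum fun w _ => ?_
  set y := funProd A w x
  calc re (inner ℂ (adjoint (funProd A w) (K y)) x) = re (inner ℂ (K y) y) := by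
        rw [adjoint_inner_left]
    _ ≤ ‖K y‖ * ‖y‖ := re_inner_le_norm _ _
    _ ≤ ‖K‖ * ‖y‖ * ‖y‖ := by gcongr; exact K.le_opNorm y
    _ = ‖K‖ * ‖y‖ ^ 2 := by ring

lemma tendsto_conjSum_apply_zero {K : X →L[ℂ] X} (hK : 0 ≤ K) (hle : ∀ N, conjSum A N K ≤ K)
    {x : X} (hx : Tendsto (fun N => ∑ w : Fin N → Fin d, ‖funProd A w x‖ ^ 2) atTop (𝓝 0)) :
    Tendsto (fun N => conjSum A N K x) atTop (𝓝 0) := by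
  have hbound (N : ℕ) :
      ‖conjSum A N K x‖ ^ 2 ≤ ‖K‖ ^ 2 * ∑ w : Fin N → Fin d, ‖funProd A w x‖ ^ 2 := by
    have hpos := conjSum_nonneg A N hK
    calc ‖conjSum A N K x‖ ^ 2 ≤ ‖conjSum A N K‖ * re (inner ℂ (conjSum A N K x) x) :=
          ((nonneg_iff_isPositive _).1 hpos).norm_apply_sq_le x
      _ ≤ ‖K‖ * (‖K‖ * ∑ w : Fin N → Fin d, ‖funProd A w x‖ ^ 2) := by
          gcongr
          · exact ((nonneg_iff_isPositive _).1 hpos).re_inner_nonneg_left x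
          · exact CStarAlgebra.norm_le_norm_of_nonneg_of_le hpos (hle N)
          · exact re_inner_conjSum_apply_le A N K x
      _ = ‖K‖ ^ 2 * ∑ w : Fin N → Fin d, ‖funProd A w x‖ ^ 2 := by ring
  have hsq : Tendsto (fun N => ‖conjSum A N K x‖ ^ 2) atTop (𝓝 0) :=
    squeeze_zero (fun N => by positivity) hbound (by simpa using hx.const_mul (‖K‖ ^ 2))
  rw [tendsto_zero_iff_norm_tendsto_zero]
  simpa using hsq.sqrt

end Words

/-- If A is strongly stable then the Stein equation has at most one positive
semidefinite solution, namely the observability gramian `∑_v A^{v*} C* C A^v`. -/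
theorem stmt4 {d : ℕ} (A : Fin d → X →L[ℂ] X) (C : X →L[ℂ] Y)
    (hstab : ∀ x : X, Filter.Tendsto
      (fun N => ∑ w : Fin N → Fin d, ‖funProd A w x‖ ^ 2) Filter.atTop (nhds 0)) :
    ∀ H : X →L[ℂ] X, H.IsPositive →
      H - ∑ j, adjoint (A j) ∘L H ∘L A j = adjoint C ∘L C →
      ∀ x : X, HasSum
        (fun v : List (Fin d) => adjoint (wordProd A v) ((adjoint C) (C (wordProd A v x))))
        (H x) := by
  intro H hH hstein x
  set Q := adjoint C ∘L C
  have hQ : 0 ≤ Q := (nonneg_iff_isPositive _).2 (isPositive_adjoint_comp_self C)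
  have hH0 : 0 ≤ H := (nonneg_iff_isPositive H).2 hH
  have hpartial (N : ℕ) : ∑ n ∈ range N, conjSum A n Q = H - conjSum A N H :=
    eq_sub_of_add_eq (eq_sum_conjSum_add_conjSum A (sub_eq_iff_eq_add'.1 hstein) N).symm
  have htail := tendsto_conjSum_apply_zero A hH0
    (fun N => sub_nonneg.1 (hpartial N ▸ sum_nonneg fun n _ => conjSum_nonneg A n hQ)) (hstab x)
  rw [← List.equivSigmaTuple.symm.hasSum_iff]
  refine hasSum_apply_of_tendsto_sum_range
    (f := fun p : Σ n, Fin n → Fin d => adjoint (funProd A p.2) ∘L Q ∘L funProd A p.2) (B := H)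
    (fun p => adjoint_conj_nonneg hQ _)
    (fun N => (hpartial N).trans_le (sub_le_self _ (conjSum_nonneg A N hH0))) ?_
  have hsum (N : ℕ) : ∑ n ∈ range N, ∑ w : Fin n → Fin d,
      (adjoint (funProd A w) ∘L Q ∘L funProd A w) x = H x - conjSum A N H x := by
    rw [← sub_apply, ← hpartial N]
    simp only [conjSum, _root_.sum_apply]
  simpa only [hsum, sub_zero] using tendsto_const_nhds.sub htail

end
end

section
/- Suppose the d-tuple A = (A_1, ..., A_d) is a row contraction, i.e., A_1* A_1 + ... + A_d* A_d <= I, and A is not strongly stable. Then the decreasing sequence Delta_N = sum over words v of length N of A^{v*} A^v converges strongly to a nonzero positive semidefinite operator Delta satisfying the homogeneous Stein equation Delta - A_1* Delta A_1 - ... - A_d* Delta A_d = 0; consequently the Stein equation H - sum_j A_j* H A_j = C* C has at least two distinct positive semidefinite solutions whenever it has one. -/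
open ContinuousLinearMap

noncomputable section

variable {X Y : Type*}
  [NormedAddCommGroup X] [InnerProductSpace ℂ X] [CompleteSpace X]
  [NormedAddCommGroup Y] [InnerProductSpace ℂ Y] [CompleteSpace Y]

/-!
Write `Φ(H) = ∑ⱼ Aⱼ* H Aⱼ`, so that `Δ_N = Φ^N(1)`. Since `Φ` is monotone and `Φ(1) ≤ 1`, the
sequence `Δ_N` decreases, and it stays positive. For `0 ≤ S ≤ R`, Cauchy–Schwarz for the
semi-inner product `⟪S ·, ·⟫` gives `‖S x‖² ≤ ‖R‖ ⟪S x, x⟫`; applied to `S = Δ_n - Δ_m ≤ Δ_0` it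
turns convergence of the decreasing real sequences `⟪Δ_N x, x⟫` into strong convergence of `Δ_N`
(Vigier's theorem). Passing to the limit in `Δ_{N+1} = Φ(Δ_N)` gives `Φ(Δ) = Δ`, and `Δ ≠ 0`
because `⟪Δ_N x, x⟫ = ∑_{|w| = N} ‖A^w x‖²`. Adding `Δ` to a solution of the Stein equation gives
another one.
-/

open Filter Topology RCLike
open scoped InnerProductSpace

namespace ContinuousLinearMap

variable {𝕜 E : Type*} [RCLike 𝕜] [NormedAddCommGroup E] [InnerProductSpace 𝕜 E]

theorem IsPositive.inner_mul_inner_self_le {T : E →L[𝕜] E} (hT : T.IsPositive) (x y : E) :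
    ‖⟪T x, y⟫_𝕜‖ * ‖⟪T y, x⟫_𝕜‖ ≤ re ⟪T x, x⟫_𝕜 * re ⟪T y, y⟫_𝕜 :=
  let core : PreInnerProductSpace.Core 𝕜 E :=
    { inner := fun u v => ⟪T u, v⟫_𝕜
      conj_inner_symm := fun u v => by
        rw [inner_conj_symm]; exact (hT.isSymmetric u v).symm
      re_inner_nonneg := hT.re_inner_nonneg_left
      add_left := fun u v w => by simp only [map_add, inner_add_left]
      smul_left := fun u v r => by simp only [map_smul, inner_smul_left] }
  @InnerProductSpace.Core.inner_mul_inner_self_le 𝕜 E _ _ _ core x y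

theorem IsPositive.norm_apply_sq_le_s5 {S R : E →L[𝕜] E} (hS : S.IsPositive) (hSR : S ≤ R)
    (x : E) : ‖S x‖ ^ 2 ≤ ‖R‖ * re ⟪S x, x⟫_𝕜 := by
  have hR : ∀ y, re ⟪S y, y⟫_𝕜 ≤ ‖R‖ * ‖y‖ ^ 2 := fun y => by
    have h := hSR.re_inner_nonneg_left y
    rw [sub_apply, inner_sub_left, map_sub, sub_nonneg] at h
    calc re ⟪S y, y⟫_𝕜 ≤ re ⟪R y, y⟫_𝕜 := h
      _ ≤ ‖R y‖ * ‖y‖ := re_inner_le_norm _ _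
      _ ≤ ‖R‖ * ‖y‖ * ‖y‖ := by gcongr; exact le_opNorm R y
      _ = ‖R‖ * ‖y‖ ^ 2 := by ring
  -- Cauchy–Schwarz for `⟪S ·, ·⟫` at `(x, S x)`: `‖S x‖⁴ ≤ re ⟪S x, x⟫ * ‖R‖ * ‖S x‖²`.
  have cs := hS.inner_mul_inner_self_le x (S x)
  rw [hS.inner_left_eq_inner_right (S x) x, inner_self_eq_norm_sq_to_K, norm_pow,
    norm_algebraMap', norm_norm] at cs
  rcases (sq_nonneg ‖S x‖).eq_or_lt with h0 | hpos
  · rw [← h0]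
    exact mul_nonneg (norm_nonneg R) (hS.re_inner_nonneg_left x)
  · refine le_of_mul_le_mul_right ?_ hpos
    nlinarith [hR (S x), hS.re_inner_nonneg_left x]

theorem IsPositive.of_tendsto {α : Type*} {l : Filter α} [l.NeBot] {T : α → E →L[𝕜] E}
    {Δ : E →L[𝕜] E} (hT : ∀ n, (T n).IsPositive)
    (h : ∀ x, Tendsto (fun n => T n x) l (𝓝 (Δ x))) :
    Δ.IsPositive := by
  refine ⟨fun x y => ?_, fun x => ?_⟩
  · show ⟪Δ x, y⟫_𝕜 = ⟪x, Δ y⟫_𝕜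
    refine tendsto_nhds_unique ((h x).inner (𝕜 := 𝕜) tendsto_const_nhds) ?_
    simpa only [(hT _).inner_left_eq_inner_right x y]
      using (tendsto_const_nhds (x := x)).inner (𝕜 := 𝕜) (h y)
  · exact ge_of_tendsto
      ((continuous_re.tendsto _).comp ((h x).inner (𝕜 := 𝕜) tendsto_const_nhds))
      (Eventually.of_forall fun n => (hT n).re_inner_nonneg_left x)

theorem cauchySeq_apply_of_antitone {T : ℕ → E →L[𝕜] E} (hT : Antitone T)
    (hT0 : ∀ n, (T n).IsPositive) (x : E) : CauchySeq fun n => T n x := by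
  set q : ℕ → ℝ := fun n => re ⟪T n x, x⟫_𝕜
  have hq : Antitone q := fun n m hnm => by
    have h := (hT hnm).re_inner_nonneg_left x
    rwa [sub_apply, inner_sub_left, map_sub, sub_nonneg] at h
  have hbdd : BddBelow (Set.range q) :=
    ⟨0, by rintro _ ⟨n, rfl⟩; exact (hT0 n).re_inner_nonneg_left x⟩
  set L := ⨅ n, q n
  have hqL : Tendsto q atTop (𝓝 L) := tendsto_atTop_ciInf hq hbdd
  have hdist : ∀ n m, n ≤ m → dist (T n x) (T m x) ^ 2 ≤ ‖T 0‖ * (q n - q m) :=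
    fun n m hnm => by
    have hle : T n - T m ≤ T 0 := by
      rw [le_def, sub_sub_eq_add_sub, add_sub_right_comm]
      exact (hT (Nat.zero_le n)).add (hT0 m)
    have h := (hT hnm).norm_apply_sq_le_s5 hle x
    rwa [sub_apply, inner_sub_left, map_sub, ← dist_eq_norm] at h
  refine cauchySeq_of_le_tendsto_0 (fun N => √(‖T 0‖ * (q N - L))) (fun n m N hn hm => ?_) ?_
  · wlog hnm : n ≤ m generalizing n m
    · rw [dist_comm]; exact this m n hm hn (le_of_not_ge hnm)
    refine Real.le_sqrt_of_sq_le ((hdist n m hnm).trans ?_)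
    gcongr
    exacts [hq hn, ciInf_le hbdd m]
  · simpa using ((hqL.sub_const L).const_mul ‖T 0‖).sqrt

variable [CompleteSpace E]

theorem exists_tendsto_apply_of_antitone {T : ℕ → E →L[𝕜] E} (hT : Antitone T)
    (hT0 : ∀ n, (T n).IsPositive) :
    ∃ Δ : E →L[𝕜] E, Δ.IsPositive ∧ ∀ x, Tendsto (fun n => T n x) atTop (𝓝 (Δ x)) := by
  choose g hg using fun x => cauchySeq_tendsto_of_complete (cauchySeq_apply_of_antitone hT hT0 x)
  let Δ := continuousLinearMapOfTendsto T (tendsto_pi_nhds.mpr hg)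
  exact ⟨Δ, IsPositive.of_tendsto hT0 hg, hg⟩

end ContinuousLinearMap

section SteinMap

variable {𝕜 E ι : Type*} [RCLike 𝕜] [NormedAddCommGroup E] [InnerProductSpace 𝕜 E]
  [CompleteSpace E] [Fintype ι] (A : ι → E →L[𝕜] E)

def steinMap (H : E →L[𝕜] E) : E →L[𝕜] E :=
  ∑ j, adjoint (A j) ∘L H ∘L A j

theorem steinMap_apply (H : E →L[𝕜] E) (x : E) :
    steinMap A H x = ∑ j, adjoint (A j) (H (A j x)) := by
  simp only [steinMap, sum_apply, comp_apply]

theorem steinMap_one : steinMap A 1 = ∑ j, adjoint (A j) ∘L A j := by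
  simp only [steinMap, one_def, id_comp]

theorem steinMap_add (H K : E →L[𝕜] E) : steinMap A (H + K) = steinMap A H + steinMap A K := by
  simp only [steinMap, add_comp, comp_add, Finset.sum_add_distrib]

theorem steinMap_sub (H K : E →L[𝕜] E) : steinMap A (H - K) = steinMap A H - steinMap A K := by
  simp only [steinMap, sub_comp, comp_sub, Finset.sum_sub_distrib]

variable {A} in
theorem ContinuousLinearMap.IsPositive.steinMap {H : E →L[𝕜] E} (hH : H.IsPositive) :
    (steinMap A H).IsPositive :=
  isPositive_sum _ fun j _ => hH.adjoint_conj (A j)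

theorem steinMap_mono : Monotone (steinMap A) := fun H K hHK => by
  rw [ContinuousLinearMap.le_def, ← steinMap_sub]
  exact hHK.steinMap

theorem antitone_steinMap_iterate_one (hA : steinMap A 1 ≤ 1) :
    Antitone fun N => (steinMap A)^[N] 1 :=
  antitone_nat_of_succ_le fun N => by
    rw [Function.iterate_succ_apply]
    exact (steinMap_mono A).iterate N hA

variable {A} in
theorem ContinuousLinearMap.IsPositive.steinMap_iterate {H : E →L[𝕜] E} (hH : H.IsPositive)
    (N : ℕ) : ((_root_.steinMap A)^[N] H).IsPositive := by
  induction N with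
  | zero => exact hH
  | succ N ih => rw [Function.iterate_succ_apply']; exact ih.steinMap

theorem steinMap_eq_of_tendsto_iterate {H Δ : E →L[𝕜] E}
    (h : ∀ x, Tendsto (fun N => (steinMap A)^[N] H x) atTop (𝓝 (Δ x))) :
    steinMap A Δ = Δ := by
  ext x
  refine tendsto_nhds_unique ?_ ((h x).comp (tendsto_add_atTop_nat 1))
  simp only [Function.comp_def, Function.iterate_succ_apply', steinMap_apply]
  exact tendsto_finsetSum _ fun j _ => ((adjoint (A j)).continuous.tendsto _).comp (h (A j x))

end SteinMap

section Words

variable {E : Type*} [NormedAddCommGroup E] [InnerProductSpace ℂ E] {d : ℕ}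
  (A : Fin d → E →L[ℂ] E)

theorem funProd_snoc {N : ℕ} (w : Fin N → Fin d) (j : Fin d) :
    funProd A (Fin.snoc w j) = funProd A w ∘L A j := by
  simp only [funProd, wordProd, List.ofFn_succ', List.map_concat, List.prod_concat,
    Fin.snoc_castSucc, Fin.snoc_last]
  rfl

variable [CompleteSpace E]

theorem steinMap_iterate_one (N : ℕ) :
    (steinMap A)^[N] 1 = ∑ w : Fin N → Fin d, adjoint (funProd A w) ∘L funProd A w := by
  induction N with
  | zero =>
    simp [funProd, wordProd, one_def, adjoint_id]
  | succ N ih =>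
    rw [Function.iterate_succ_apply', ih, steinMap,
      ← Fintype.sum_equiv (Fin.snocEquiv fun _ => Fin d) (fun p => adjoint (A p.1) ∘L
        (adjoint (funProd A p.2) ∘L funProd A p.2) ∘L A p.1) _ fun p => ?_,
      Fintype.sum_prod_type]
    · simp only [comp_finsetSum, finsetSum_comp]
    · simp [Fin.snocEquiv, funProd_snoc, adjoint_comp, comp_assoc]

theorem re_inner_steinMap_iterate_one (N : ℕ) (x : E) :
    re ⟪(steinMap A)^[N] 1 x, x⟫_ℂ = ∑ w : Fin N → Fin d, ‖funProd A w x‖ ^ 2 := by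
  simp only [steinMap_iterate_one, sum_apply, sum_inner, map_sum,
    apply_norm_sq_eq_inner_adjoint_left]

end Words

/-- If A is a row contraction (in the sense ∑_j A_j* A_j ≤ I) which is not strongly
stable, then Δ_N = ∑_{|v|=N} A^{v*} A^v converges strongly to a nonzero positive
semidefinite Δ solving the homogeneous Stein equation; consequently the Stein
equation `H - ∑_j A_j* H A_j = C* C` has at least two distinct positive
semidefinite solutions whenever it has one. -/
theorem stmt5 {d : ℕ} (A : Fin d → X →L[ℂ] X)
    (hrow : ((1 : X →L[ℂ] X) - ∑ j, adjoint (A j) ∘L A j).IsPositive)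
    (hns : ¬ ∀ x : X, Filter.Tendsto
      (fun N => ∑ w : Fin N → Fin d, ‖funProd A w x‖ ^ 2) Filter.atTop (nhds 0)) :
    ∃ Δ : X →L[ℂ] X,
      (∀ x : X, Filter.Tendsto
        (fun N => ∑ w : Fin N → Fin d, adjoint (funProd A w) (funProd A w x))
        Filter.atTop (nhds (Δ x))) ∧
      Δ.IsPositive ∧ Δ ≠ 0 ∧
      Δ - ∑ j, adjoint (A j) ∘L Δ ∘L A j = 0 ∧
      ∀ (C : X →L[ℂ] Y) (H : X →L[ℂ] X), H.IsPositive →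
        H - ∑ j, adjoint (A j) ∘L H ∘L A j = adjoint C ∘L C →
        ∃ H' : X →L[ℂ] X, H'.IsPositive ∧
          H' - ∑ j, adjoint (A j) ∘L H' ∘L A j = adjoint C ∘L C ∧ H' ≠ H := by
  have hA : steinMap A 1 ≤ 1 := by rwa [ContinuousLinearMap.le_def, steinMap_one]
  obtain ⟨Δ, hΔpos, hΔ⟩ := exists_tendsto_apply_of_antitone (antitone_steinMap_iterate_one A hA)
    isPositive_one.steinMap_iterate
  have hfix : steinMap A Δ = Δ := steinMap_eq_of_tendsto_iterate A hΔ
  have hΔne : Δ ≠ 0 := by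
    rintro rfl
    refine hns fun x => ?_
    simp_rw [← re_inner_steinMap_iterate_one]
    simpa [Function.comp_def] using
      (continuous_re.tendsto _).comp ((hΔ x).inner (𝕜 := ℂ) tendsto_const_nhds)
  refine ⟨Δ, fun x => by simpa [steinMap_iterate_one, sum_apply] using hΔ x, hΔpos, hΔne,
    sub_eq_zero.mpr hfix.symm, fun C H hH hHC => ⟨H + Δ, hH.add hΔpos, ?_, by simpa using hΔne⟩⟩
  change H - steinMap A H = _ at hHC
  change H + Δ - steinMap A (H + Δ) = _
  rw [steinMap_add, hfix, ← hHC]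
  abel

end
end

section
/- Let M be a closed subspace of the Drury-Arveson space H_Y(k_d) (with the inherited norm) and suppose T = (T_1, ..., T_d) is a contractive solution of the Gleason problem on M, i.e., T_j are bounded operators on M with f(lambda) - f(0) = sum_j lambda_j (T_j f)(lambda) for all f in M and sum_j ||T_j f||^2 <= ||f||^2 - ||f(0)||^2. Then M is invariant under each backward shift M_{lambda_j}* and T_j = M_{lambda_j}*|_M for j = 1, ..., d. -/
open ContinuousLinearMap

noncomputable section

variable {H Y : Type*}
  [NormedAddCommGroup H] [InnerProductSpace ℂ H] [CompleteSpace H]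
  [NormedAddCommGroup Y] [InnerProductSpace ℂ Y] [CompleteSpace Y]

/-- The weight `n!/|n|!` attached to a multi-index `n` (the Drury–Arveson weight). -/
def wt {d : ℕ} (n : Fin d → ℕ) : ℝ :=
  ((∏ i, Nat.factorial (n i) : ℕ) : ℝ) / ((Nat.factorial (∑ i, n i) : ℕ) : ℝ)

/-- The `j`-th standard unit multi-index `e_j`. -/
def eIdx {d : ℕ} (j : Fin d) : Fin d → ℕ := fun i => if i = j then 1 else 0

open scoped ComplexInnerProductSpace

section auxNat
variable {d : ℕ}

lemma wt_pos (n : Fin d → ℕ) : 0 < wt n := by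
  have h1 : 0 < ∏ i, Nat.factorial (n i) := Finset.prod_pos fun i _ => Nat.factorial_pos _
  have h2 : 0 < Nat.factorial (∑ i, n i) := Nat.factorial_pos _
  exact div_pos (by exact_mod_cast h1) (by exact_mod_cast h2)

lemma wt_zero : wt (0 : Fin d → ℕ) = 1 := by
  simp [wt]

lemma sum_eIdx (j : Fin d) : ∑ i, eIdx j i = 1 := by
  simp [eIdx]

lemma sum_add_eIdx (m : Fin d → ℕ) (j : Fin d) :
    ∑ i, (m + eIdx j) i = (∑ i, m i) + 1 := by
  simp [Pi.add_apply, Finset.sum_add_distrib, sum_eIdx]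

lemma prod_factorial_add_eIdx (m : Fin d → ℕ) (j : Fin d) :
    (∏ i, Nat.factorial ((m + eIdx j) i)) = (m j + 1) * ∏ i, Nat.factorial (m i) := by
  have h : ∀ i, Nat.factorial ((m + eIdx j) i)
      = (if i = j then m j + 1 else 1) * Nat.factorial (m i) := by
    intro i
    by_cases hij : i = j
    · subst hij; simp [eIdx, Nat.factorial_succ]
    · simp [eIdx, hij]
  rw [Finset.prod_congr rfl fun i _ => h i, Finset.prod_mul_distrib]
  simp

lemma wt_add_eIdx (m : Fin d → ℕ) (j : Fin d) :
    wt (m + eIdx j) = (((m j : ℝ) + 1) / (((∑ i, m i : ℕ) : ℝ) + 1)) * wt m := by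
  unfold wt
  rw [sum_add_eIdx, prod_factorial_add_eIdx, Nat.factorial_succ]
  have h1 : ((∑ i, m i : ℕ) : ℝ) + 1 ≠ 0 := by positivity
  have h2 : ((Nat.factorial (∑ i, m i) : ℕ) : ℝ) ≠ 0 := by
    exact_mod_cast (Nat.factorial_pos _).ne'
  push_cast
  field_simp

lemma sub_add_eIdx (m : Fin d → ℕ) (j : Fin d) : (m + eIdx j) - eIdx j = m := by
  funext i; simp [eIdx, Pi.sub_apply]

lemma add_eIdx_apply_self (m : Fin d → ℕ) (j : Fin d) : (m + eIdx j) j = m j + 1 := by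
  simp [eIdx]

lemma mem_range_add_eIdx {n : Fin d → ℕ} {j : Fin d} (h : n j ≠ 0) :
    n ∈ Set.range (· + eIdx j) := by
  refine ⟨n - eIdx j, funext fun i => ?_⟩
  by_cases hij : i = j
  · subst hij
    simp [eIdx, Nat.sub_add_cancel (Nat.one_le_iff_ne_zero.mpr h)]
  · simp [eIdx, hij]

/-- The ratio `r` appearing in the backward-shift coefficients. -/
def rWt {d : ℕ} (j : Fin d) (m : Fin d → ℕ) : ℝ :=
  ((m j : ℝ) + 1) / (((∑ i, m i : ℕ) : ℝ) + 1)

lemma rWt_pos (j : Fin d) (m : Fin d → ℕ) : 0 < rWt j m := by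
  unfold rWt; positivity

lemma rWt_le_one (j : Fin d) (m : Fin d → ℕ) : rWt j m ≤ 1 := by
  unfold rWt
  rw [div_le_one (by positivity)]
  have : m j ≤ ∑ i, m i := Finset.single_le_sum (fun i _ => Nat.zero_le _) (Finset.mem_univ j)
  have := (Nat.cast_le (α := ℝ)).mpr this
  linarith

lemma wt_add_eIdx' (m : Fin d → ℕ) (j : Fin d) : wt (m + eIdx j) = rWt j m * wt m :=
  wt_add_eIdx m j

end auxNat

section auxH
variable {d : ℕ}

lemma hasSum_inner' (coef : H →ₗ[ℂ] ((Fin d → ℕ) → Y))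
    (hnorm : ∀ f : H, HasSum (fun n : Fin d → ℕ => wt n * ‖coef f n‖ ^ 2) (‖f‖ ^ 2))
    (f g : H) :
    HasSum (fun n : Fin d → ℕ => (wt n : ℂ) * ⟪coef f n, coef g n⟫) ⟪f, g⟫ := by
  have H1 := (Complex.hasSum_ofReal).mpr (hnorm (f + g))
  have H2 := (Complex.hasSum_ofReal).mpr (hnorm (f - g))
  have H3 := (Complex.hasSum_ofReal).mpr (hnorm (f - (RCLike.I : ℂ) • g))
  have H4 := (Complex.hasSum_ofReal).mpr (hnorm (f + (RCLike.I : ℂ) • g))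
  have key := ((H1.sub H2).add ((H3.sub H4).mul_right (RCLike.I : ℂ))).div_const 4
  have hfun : (fun n : Fin d → ℕ => (wt n : ℂ) * ⟪coef f n, coef g n⟫)
      = fun n : Fin d → ℕ =>
        (((wt n * ‖coef (f + g) n‖ ^ 2 : ℝ) : ℂ) - ((wt n * ‖coef (f - g) n‖ ^ 2 : ℝ) : ℂ)
          + (((wt n * ‖coef (f - (RCLike.I : ℂ) • g) n‖ ^ 2 : ℝ) : ℂ)
            - ((wt n * ‖coef (f + (RCLike.I : ℂ) • g) n‖ ^ 2 : ℝ) : ℂ)) * (RCLike.I : ℂ)) / 4 := by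
    funext n
    have hpol := inner_eq_sum_norm_sq_div_four (𝕜 := ℂ) (coef f n) (coef g n)
    simp only [map_add, map_sub, map_smul, Pi.add_apply, Pi.sub_apply, Pi.smul_apply]
    rw [hpol]
    simp only [show ∀ s : ℝ, (RCLike.ofReal s : ℂ) = (s : ℂ) from fun _ => rfl]
    push_cast
    ring
  have hval : (⟪f, g⟫ : ℂ)
      = (((‖f + g‖ ^ 2 : ℝ) : ℂ) - ((‖f - g‖ ^ 2 : ℝ) : ℂ)
          + (((‖f - (RCLike.I : ℂ) • g‖ ^ 2 : ℝ) : ℂ)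
            - ((‖f + (RCLike.I : ℂ) • g‖ ^ 2 : ℝ) : ℂ)) * (RCLike.I : ℂ)) / 4 := by
    rw [inner_eq_sum_norm_sq_div_four (𝕜 := ℂ) f g]
    simp only [show ∀ s : ℝ, (RCLike.ofReal s : ℂ) = (s : ℂ) from fun _ => rfl]
    push_cast
    ring
  rw [hfun, hval]
  exact key

lemma inner_mon_zero' (coef : H →ₗ[ℂ] ((Fin d → ℕ) → Y))
    (mon : (Fin d → ℕ) → Y →ₗ[ℂ] H)
    (hnorm : ∀ f : H, HasSum (fun n : Fin d → ℕ => wt n * ‖coef f n‖ ^ 2) (‖f‖ ^ 2))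
    (hmon : ∀ (m : Fin d → ℕ) (y : Y) (n : Fin d → ℕ),
      coef (mon m y) n = if n = m then y else 0)
    (y : Y) (f : H) :
    (⟪(mon 0 y : H), f⟫ : ℂ) = ⟪y, coef f 0⟫ := by
  have h := hasSum_inner' coef hnorm (mon 0 y) f
  have hfun : (fun n : Fin d → ℕ => (wt n : ℂ) * ⟪coef (mon 0 y) n, coef f n⟫)
      = fun n : Fin d → ℕ => if n = 0 then (⟪y, coef f 0⟫ : ℂ) else 0 := by
    funext n
    by_cases hn : n = 0
    · subst hn
      rw [hmon, if_pos rfl, wt_zero]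
      simp
    · rw [hmon, if_neg hn, if_neg hn, inner_zero_left, mul_zero]
  rw [hfun] at h
  exact h.unique (hasSum_ite_eq 0 _)

lemma coef_adjoint' (coef : H →ₗ[ℂ] ((Fin d → ℕ) → Y))
    (M : Fin d → H →L[ℂ] H)
    (hnorm : ∀ f : H, HasSum (fun n : Fin d → ℕ => wt n * ‖coef f n‖ ^ 2) (‖f‖ ^ 2))
    (hsurj : ∀ F : (Fin d → ℕ) → Y,
      Summable (fun n : Fin d → ℕ => wt n * ‖F n‖ ^ 2) → ∃ f : H, coef f = F)
    (hM : ∀ (j : Fin d) (f : H) (m : Fin d → ℕ),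
      coef (M j f) m = if m j = 0 then 0 else coef f (m - eIdx j))
    (j : Fin d) (f : H) :
    coef (adjoint (M j) f)
      = fun m => ((rWt j m : ℝ) : ℂ) • coef f (m + eIdx j) := by
  set F : (Fin d → ℕ) → Y := fun m => ((rWt j m : ℝ) : ℂ) • coef f (m + eIdx j) with hF
  have hFnorm : ∀ m, wt m * ‖F m‖ ^ 2
      = rWt j m * (wt (m + eIdx j) * ‖coef f (m + eIdx j)‖ ^ 2) := by
    intro m
    have : ‖F m‖ = rWt j m * ‖coef f (m + eIdx j)‖ := by
      rw [hF]
      simp [norm_smul, Complex.norm_real, abs_of_pos (rWt_pos j m)]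
    rw [this, wt_add_eIdx']
    ring
  have hsummable : Summable (fun m : Fin d → ℕ => wt m * ‖F m‖ ^ 2) := by
    have hs : Summable ((fun n : Fin d → ℕ => wt n * ‖coef f n‖ ^ 2) ∘ (· + eIdx j)) :=
      (hnorm f).summable.comp_injective (add_left_injective (eIdx j))
    refine Summable.of_nonneg_of_le
      (fun m => mul_nonneg (wt_pos m).le (sq_nonneg _)) (fun m => ?_) hs
    rw [hFnorm]
    exact mul_le_of_le_one_left (mul_nonneg (wt_pos _).le (sq_nonneg _)) (rWt_le_one j m)
  obtain ⟨g, hg⟩ := hsurj F hsummable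
  suffices hga : g = adjoint (M j) f by rw [← hga, hg]
  refine ext_inner_right ℂ fun v => ?_
  rw [adjoint_inner_left]
  have hL := hasSum_inner' coef hnorm g v
  have hRfull := hasSum_inner' coef hnorm f (M j v)
  have hvanish : ∀ n : Fin d → ℕ, n ∉ Set.range (· + eIdx j) →
      (wt n : ℂ) * ⟪coef f n, coef (M j v) n⟫ = 0 := by
    intro n hn
    have hnj : n j = 0 := by
      by_contra h
      exact hn (mem_range_add_eIdx h)
    rw [hM, if_pos hnj, inner_zero_right, mul_zero]
  have hR := (Function.Injective.hasSum_iff (add_left_injective (eIdx j)) hvanish).mpr hRfull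
  have hfun : ((fun n : Fin d → ℕ => (wt n : ℂ) * ⟪coef f n, coef (M j v) n⟫) ∘ (· + eIdx j))
      = fun m : Fin d → ℕ => (wt m : ℂ) * ⟪coef g m, coef v m⟫ := by
    funext m
    have h1 : (m + eIdx j) j ≠ 0 := by rw [add_eIdx_apply_self]; exact Nat.succ_ne_zero _
    simp only [Function.comp_apply, hM, if_neg h1, hg, hF, sub_add_eIdx]
    rw [inner_smul_left, wt_add_eIdx']
    simp only [Complex.conj_ofReal]
    push_cast
    ring
  rw [hfun] at hR
  exact hL.unique hR

lemma sum_sq_adjoint' (coef : H →ₗ[ℂ] ((Fin d → ℕ) → Y))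
    (M : Fin d → H →L[ℂ] H)
    (hnorm : ∀ f : H, HasSum (fun n : Fin d → ℕ => wt n * ‖coef f n‖ ^ 2) (‖f‖ ^ 2))
    (hsurj : ∀ F : (Fin d → ℕ) → Y,
      Summable (fun n : Fin d → ℕ => wt n * ‖F n‖ ^ 2) → ∃ f : H, coef f = F)
    (hM : ∀ (j : Fin d) (f : H) (m : Fin d → ℕ),
      coef (M j f) m = if m j = 0 then 0 else coef f (m - eIdx j))
    (f : H) :
    ∑ j, ‖adjoint (M j) f‖ ^ 2 = ‖f‖ ^ 2 - ‖coef f 0‖ ^ 2 := by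
  classical
  set G : Fin d → (Fin d → ℕ) → ℝ :=
    fun j n => ((n j : ℝ) / ((∑ i, n i : ℕ) : ℝ)) * (wt n * ‖coef f n‖ ^ 2) with hG
  have hj : ∀ j, HasSum (G j) (‖adjoint (M j) f‖ ^ 2) := by
    intro j
    have h := hnorm (adjoint (M j) f)
    simp only [coef_adjoint' coef M hnorm hsurj hM j f] at h
    refine (Function.Injective.hasSum_iff (add_left_injective (eIdx j)) ?_).mp ?_
    · intro n hn
      have hnj : n j = 0 := by
        by_contra hc
        exact hn (mem_range_add_eIdx hc)
      simp [hG, hnj]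
    · have hfun : (G j ∘ (· + eIdx j))
          = fun m : Fin d → ℕ => wt m * ‖((rWt j m : ℝ) : ℂ) • coef f (m + eIdx j)‖ ^ 2 := by
        funext m
        have hns : ‖((rWt j m : ℝ) : ℂ) • coef f (m + eIdx j)‖
            = rWt j m * ‖coef f (m + eIdx j)‖ := by
          simp [norm_smul, Complex.norm_real, abs_of_pos (rWt_pos j m)]
        simp only [Function.comp_apply, hG, hns, add_eIdx_apply_self, sum_add_eIdx]
        rw [wt_add_eIdx']
        unfold rWt
        push_cast
        ring
      rw [hfun]
      exact h
  have hsum : HasSum (fun n => ∑ j, G j n) (∑ j, ‖adjoint (M j) f‖ ^ 2) :=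
    hasSum_sum fun j _ => hj j
  have h0 : HasSum
      (fun n : Fin d → ℕ => wt n * ‖coef f n‖ ^ 2 - if n = 0 then ‖coef f 0‖ ^ 2 else 0)
      (‖f‖ ^ 2 - ‖coef f 0‖ ^ 2) := (hnorm f).sub (hasSum_ite_eq 0 _)
  have hfun : (fun n => ∑ j, G j n)
      = fun n : Fin d → ℕ => wt n * ‖coef f n‖ ^ 2 - if n = 0 then ‖coef f 0‖ ^ 2 else 0 := by
    funext n
    by_cases hn : n = 0
    · subst hn
      simp [hG, wt_zero]
    · have hS : (0 : ℝ) < ((∑ i, n i : ℕ) : ℝ) := by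
        have : ∑ i, n i ≠ 0 := by
          intro hc
          apply hn
          funext i
          exact Finset.sum_eq_zero_iff.mp hc i (Finset.mem_univ i)
        exact_mod_cast Nat.pos_of_ne_zero this
      simp only [hG, if_neg hn, sub_zero]
      rw [← Finset.sum_mul, ← Finset.sum_div]
      have : (∑ j, (n j : ℝ)) = ((∑ i, n i : ℕ) : ℝ) := by push_cast; rfl
      rw [this, div_self (ne_of_gt hS), one_mul]
  rw [hfun] at hsum
  exact hsum.unique h0



end auxH

/-- Uniqueness of contractive solutions of the Gleason problem: if `K` is a closed
subspace of the Drury–Arveson space (axiomatized as in the scaffold) and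
`T = (T_1, …, T_d)` is a tuple of bounded operators on `K` with
`f - f(0) = ∑_j λ_j (T_j f)` and `∑_j ‖T_j f‖² ≤ ‖f‖² - ‖f(0)‖²` for all `f ∈ K`,
then `K` is invariant under each backward shift `M_{λ_j}*` and
`T_j = M_{λ_j}*|_K`. -/
theorem stmt19 {d : ℕ}
    (coef : H →ₗ[ℂ] ((Fin d → ℕ) → Y))
    (M : Fin d → H →L[ℂ] H)
    (mon : (Fin d → ℕ) → Y →ₗ[ℂ] H)
    (hnorm : ∀ f : H, HasSum (fun n : Fin d → ℕ => wt n * ‖coef f n‖ ^ 2) (‖f‖ ^ 2))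
    (hsurj : ∀ F : (Fin d → ℕ) → Y,
      Summable (fun n : Fin d → ℕ => wt n * ‖F n‖ ^ 2) → ∃ f : H, coef f = F)
    (hM : ∀ (j : Fin d) (f : H) (m : Fin d → ℕ),
      coef (M j f) m = if m j = 0 then 0 else coef f (m - eIdx j))
    (hmon : ∀ (m : Fin d → ℕ) (y : Y) (n : Fin d → ℕ),
      coef (mon m y) n = if n = m then y else 0)
    (K : Submodule ℂ H) (hK : IsClosed (K : Set H))
    (T : Fin d → ↥K →L[ℂ] ↥K)
    (hGleason : ∀ f : ↥K,
      (f : H) - mon 0 (coef (f : H) 0) = ∑ j, M j ((T j f : H)))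
    (hcontr : ∀ f : ↥K,
      ∑ j, ‖T j f‖ ^ 2 ≤ ‖f‖ ^ 2 - ‖coef (f : H) 0‖ ^ 2) :
    ∀ j : Fin d,
      (∀ f : H, f ∈ K → adjoint (M j) f ∈ K) ∧
      (∀ f : ↥K, (T j f : H) = adjoint (M j) (f : H)) := by
  have key : ∀ (f : ↥K) (j : Fin d), (T j f : H) = adjoint (M j) (f : H) := by
    intro f
    set D : ℝ := ‖(f : H)‖ ^ 2 - ‖coef (f : H) 0‖ ^ 2 with hD
    have hinner : ∑ j, (⟪((T j f : H)), adjoint (M j) (f : H)⟫ : ℂ) = (D : ℂ) := by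
      have h1 : ∀ j, (⟪((T j f : H)), adjoint (M j) (f : H)⟫ : ℂ)
          = ⟪M j ((T j f : H)), (f : H)⟫ := fun j => adjoint_inner_right _ _ _
      calc ∑ j, (⟪((T j f : H)), adjoint (M j) (f : H)⟫ : ℂ)
          = ∑ j, (⟪M j ((T j f : H)), (f : H)⟫ : ℂ) := by simp_rw [h1]
        _ = ⟪∑ j, M j ((T j f : H)), (f : H)⟫ := (sum_inner _ _ _).symm
        _ = ⟪(f : H) - mon 0 (coef (f : H) 0), (f : H)⟫ := by rw [← hGleason f]
        _ = ⟪(f : H), (f : H)⟫ - ⟪(mon 0 (coef (f : H) 0) : H), (f : H)⟫ :=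
            inner_sub_left _ _ _
        _ = (D : ℂ) := by
            rw [inner_mon_zero' coef mon hnorm hmon, inner_self_eq_norm_sq_to_K,
              inner_self_eq_norm_sq_to_K]
            simp only [show ∀ s : ℝ, (RCLike.ofReal s : ℂ) = (s : ℂ) from fun _ => rfl, hD]
            push_cast
            ring
    have hre : ∑ j, Complex.re (⟪((T j f : H)), adjoint (M j) (f : H)⟫ : ℂ) = D := by
      have h := congrArg Complex.re hinner
      rw [Complex.re_sum] at h
      simpa using h
    have hcontr' : ∑ j, ‖(T j f : H)‖ ^ 2 ≤ D := by
      have h := hcontr f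
      simpa [Submodule.coe_norm, hD] using h
    have hadj : ∑ j, ‖adjoint (M j) (f : H)‖ ^ 2 = D := by
      rw [sum_sq_adjoint' coef M hnorm hsurj hM (f : H)]
    have hterm : ∀ j, ‖(T j f : H) - adjoint (M j) (f : H)‖ ^ 2
        = ‖(T j f : H)‖ ^ 2
          - 2 * Complex.re (⟪((T j f : H)), adjoint (M j) (f : H)⟫ : ℂ)
          + ‖adjoint (M j) (f : H)‖ ^ 2 := by
      intro j
      have h := norm_sub_sq (𝕜 := ℂ) ((T j f : H)) (adjoint (M j) (f : H))
      simpa [RCLike.re_eq_complex_re] using h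
    have hsumsq : ∑ j, ‖(T j f : H) - adjoint (M j) (f : H)‖ ^ 2 ≤ 0 := by
      have heq : ∑ j, ‖(T j f : H) - adjoint (M j) (f : H)‖ ^ 2
          = (∑ j, ‖(T j f : H)‖ ^ 2)
            - 2 * (∑ j, Complex.re (⟪((T j f : H)), adjoint (M j) (f : H)⟫ : ℂ))
            + ∑ j, ‖adjoint (M j) (f : H)‖ ^ 2 := by
        simp_rw [hterm]
        rw [Finset.sum_add_distrib, Finset.sum_sub_distrib, Finset.mul_sum]
      rw [heq, hre, hadj]
      linarith
    intro j
    have hnn : ∀ i ∈ Finset.univ, (0:ℝ) ≤ ‖(T i f : H) - adjoint (M i) (f : H)‖ ^ 2 :=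
      fun i _ => sq_nonneg _
    have hz := (Finset.sum_eq_zero_iff_of_nonneg hnn).mp
      (le_antisymm hsumsq (Finset.sum_nonneg hnn)) j (Finset.mem_univ j)
    have := norm_eq_zero.mp ((pow_eq_zero_iff two_ne_zero).mp hz)
    exact sub_eq_zero.mp this
  intro j
  refine ⟨fun f hf => ?_, fun f => key f j⟩
  rw [← key ⟨f, hf⟩ j]
  exact (T j ⟨f, hf⟩).2

end
end
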